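/- arXiv:2209.07740 — 5 statements merged into one kernel-verified Lean document; each statement's English description precedes it below -/
import Mathlib

section
/- Let w_1, …, w_p : X → ℝ be the weight functions of the trees of a forest, let w = ∑_{k=1}^p w_k, and let f be the classifier with f(x') = 1 iff w(x') > 0. Let x ∈ X with w(x) > 0, let S ⊆ Fin n, and for each k ∈ Fin p let x*_k be a worst instance extending S given w_k (x*_k ∈ Ext(x,S) and w_k(x*_k) ≤ w_k(x') for all x' ∈ Ext(x,S)). If ∑_{k=1}^p w_k(x*_k) > 0, then S is an abductive explanation for x given f: every x' ∈ Ext(x,S) satisfies w(x') > 0. -/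
/-- The set of extensions of `x` on the set of attributes `S`. -/
def extSet {n : ℕ} {D : Fin n → Type*} (x : (i : Fin n) → D i) (S : Set (Fin n)) :
    Set ((i : Fin n) → D i) := {x' | ∀ i ∈ S, x' i = x i}

/-- Binary case, positive instance: if the sum over the trees of the worst-case
weights over the extensions of `x` on `S` is positive, then `S` is an abductive
explanation for `x` given the forest. -/
theorem stmt3 {n p : ℕ} (hn : 1 ≤ n) (D : Fin n → Type*)
    (w : Fin p → ((i : Fin n) → D i) → ℝ)
    (x : (i : Fin n) → D i) (hx : 0 < ∑ k, w k x) (S : Set (Fin n))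
    (xs : Fin p → ((i : Fin n) → D i))
    (hxs : ∀ k, xs k ∈ extSet x S)
    (hworst : ∀ k, ∀ x' ∈ extSet x S, w k (xs k) ≤ w k x')
    (hsum : 0 < ∑ k, w k (xs k)) :
    ∀ x' ∈ extSet x S, 0 < ∑ k, w k x' := by
  intro x' hx'
  exact lt_of_lt_of_le hsum (Finset.sum_le_sum fun k _ => hworst k x' hx')
end

section
/- Let m ≥ 2 and, for each class j ∈ Fin m, let w^j_1, …, w^j_{p_j} : X → ℝ be the tree weight functions of forest F^j, with total weight W_j = ∑_{k=1}^{p_j} w^j_k. Let x ∈ X and i ∈ Fin m be such that W_j(x) < W_i(x) for all j ≠ i, and let S ⊆ Fin n. For each k let x*_k ∈ Ext(x,S) be a worst instance extending S given w^i_k (w^i_k(x*_k) ≤ w^i_k(x') for all x' ∈ Ext(x,S)), and for each j ≠ i and each k let y*_{j,k} ∈ Ext(x,S) be a best instance extending S given w^j_k (w^j_k(x') ≤ w^j_k(y*_{j,k}) for all x' ∈ Ext(x,S)). If for every j ≠ i we have ∑_{k=1}^{p_i} w^i_k(x*_k) > ∑_{k=1}^{p_j} w^j_k(y*_{j,k}),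 then S is an abductive explanation for x given the boosted tree: every x' ∈ Ext(x,S) satisfies W_j(x') < W_i(x') for all j ≠ i. -/
/-- Multi-class case: if for every competing class `j ≠ i` the sum of the per-tree
worst-case weights of forest `i` exceeds the sum of the per-tree best-case weights of
forest `j` (over the extensions of `x` on `S`), then `S` is an abductive explanation
for `x` given the boosted tree. -/
theorem stmt5 {n m : ℕ} (hn : 1 ≤ n) (hm : 2 ≤ m) (D : Fin n → Type*)
    (p : Fin m → ℕ)
    (w : (j : Fin m) → Fin (p j) → ((i : Fin n) → D i) → ℝ)
    (x : (i : Fin n) → D i) (i : Fin m)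
    (hxi : ∀ j, j ≠ i → (∑ k, w j k x) < ∑ k, w i k x) (S : Set (Fin n))
    (xs : Fin (p i) → ((i : Fin n) → D i))
    (hxs : ∀ k, xs k ∈ extSet x S)
    (hworst : ∀ k, ∀ x' ∈ extSet x S, w i k (xs k) ≤ w i k x')
    (ys : (j : Fin m) → Fin (p j) → ((i : Fin n) → D i))
    (hys : ∀ j, j ≠ i → ∀ k, ys j k ∈ extSet x S)
    (hbest : ∀ j, j ≠ i → ∀ k, ∀ x' ∈ extSet x S, w j k x' ≤ w j k (ys j k))
    (hsum : ∀ j, j ≠ i → (∑ k, w j k (ys j k)) < ∑ k, w i k (xs k)) :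
    ∀ x' ∈ extSet x S, ∀ j, j ≠ i → (∑ k, w j k x') < ∑ k, w i k x' := by
  intro x' hx' j hj
  calc (∑ k, w j k x') ≤ ∑ k, w j k (ys j k) :=
        Finset.sum_le_sum fun k _ => hbest j hj k x' hx'
    _ < ∑ k, w i k (xs k) := hsum j hj
    _ ≤ ∑ k, w i k x' := Finset.sum_le_sum fun k _ => hworst k x' hx'
end

section
/- Let α be a type with decidable equality, let P : Finset α → Prop be a decidable predicate that is monotone with respect to inclusion (if S ⊆ S' and P S then P S'), let s₀ : Finset α satisfy P s₀, and let l be a list containing every element of s₀. Let t be the result of List.foldl (fun t c => if P (t.erase c) then t.erase c else t) s₀ l. Then t ⊆ s₀, P t holds, and no proper subset t' ⊊ t satisfies P t'. -/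
private lemma stmt7_aux {α : Type*} [DecidableEq α] (P : Finset α → Prop) [DecidablePred P]
    (hmono : ∀ S S' : Finset α, S ⊆ S' → P S → P S') :
    ∀ (l : List α) (s : Finset α), P s →
      (l.foldl (fun t c => if P (t.erase c) then t.erase c else t) s) ⊆ s ∧
      P (l.foldl (fun t c => if P (t.erase c) then t.erase c else t) s) ∧
      ∀ a ∈ l, a ∈ (l.foldl (fun t c => if P (t.erase c) then t.erase c else t) s) →
        ¬ P ((l.foldl (fun t c => if P (t.erase c) then t.erase c else t) s).erase a) := by
  intro l
  induction l with
  | nil => intro s hs; exact ⟨subset_rfl, hs, by simp⟩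
  | cons c l ih =>
    intro s hs
    simp only [List.foldl_cons]
    set s' : Finset α := if P (s.erase c) then s.erase c else s with hs'
    have hs'sub : s' ⊆ s := by
      rw [hs']; split <;> [exact Finset.erase_subset _ _; exact subset_rfl]
    have hPs' : P s' := by
      rw [hs']; split <;> [assumption; exact hs]
    obtain ⟨h1, h2, h3⟩ := ih s' hPs'
    refine ⟨h1.trans hs'sub, h2, ?_⟩
    intro a ha hat
    rcases List.mem_cons.mp ha with rfl | hal
    · by_cases hcl : a ∈ l
      · exact h3 a hcl hat
      · -- a = c not in l; at the step, removal was rejected (else a ∉ s')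
        have hns : ¬ P (s.erase a) := by
          intro hp
          have : s' = s.erase a := by rw [hs', if_pos hp]
          have : a ∉ s' := this ▸ Finset.notMem_erase a s
          exact this (h1 hat)
        intro hp
        exact hns (hmono _ _ (Finset.erase_subset_erase a (h1.trans hs'sub)) hp)
    · exact h3 a hal hat

/-- Correctness of the greedy elimination algorithm: starting from `s₀` satisfying a
monotone decidable predicate `P` and trying to remove each element of a list `l`
covering `s₀` (removing it exactly when `P` still holds after removal), the result
is a subset-minimal subset of `s₀` satisfying `P`. -/
theorem stmt7 {α : Type*} [DecidableEq α] (P : Finset α → Prop) [DecidablePred P]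
    (hmono : ∀ S S' : Finset α, S ⊆ S' → P S → P S')
    (s₀ : Finset α) (hs₀ : P s₀) (l : List α) (hl : ∀ a ∈ s₀, a ∈ l)
    (t : Finset α)
    (ht : t = List.foldl (fun t c => if P (t.erase c) then t.erase c else t) s₀ l) :
    t ⊆ s₀ ∧ P t ∧ ∀ t' : Finset α, t' ⊂ t → ¬ P t' := by
  obtain ⟨h1, h2, h3⟩ := stmt7_aux P hmono l s₀ hs₀
  rw [← ht] at h1 h2 h3
  refine ⟨h1, h2, ?_⟩
  intro t' ht' hp
  obtain ⟨a, hat, hat'⟩ := Finset.ssubset_iff_of_subset ht'.subset |>.mp ht'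
  have hna : ¬ P (t.erase a) := h3 a (hl a (h1 hat)) hat
  exact hna (hmono _ _ (fun x hx => Finset.mem_erase.mpr ⟨fun h => hat' (h ▸ hx), ht'.subset hx⟩) hp)
end

section
/- Let n ≥ 1 and X = (Fin n → Bool). For each i ∈ Fin n define w_i⁺ : X → ℝ by w_i⁺(x) = 1/2 if x i = true and −1/2 otherwise, and w_i⁻ = −w_i⁺. Let x₀ ∈ X be the all-false instance. Then: (a) for every x ∈ X, ∑_{i ∈ Fin n} (w_i⁺(x) + w_i⁻(x)) = 0, so the classifier f with f(x) = 1 iff this sum is positive is constantly 0, and the empty set is the unique sufficient reason (subset-minimal abductive explanation) for x₀ given f; (b) a set S ⊆ Fin n satisfies ∑_{i ∈ Fin n} (max_{x' ∈ Ext(x₀,S)} w_i⁺(x') + max_{x' ∈ Ext(x₀,S)} w_i⁻(x')) ≤ 0 if and only if S = Fin n; hence the full set Fin n is the unique tree-specific explanation for x₀ given this boosted tree. -/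
/-- The gap between tree-specific explanations and sufficient reasons can be maximal:
with trees `wp i` and `wm i = -wp i` for each attribute, the induced classifier is
constantly `0`, the empty set is the unique sufficient reason for the all-false
instance `x₀`, yet the full set of attributes is the unique tree-specific explanation
for `x₀`. -/
theorem stmt13 {n : ℕ} (hn : 1 ≤ n)
    (wp wm : Fin n → (Fin n → Bool) → ℝ)
    (hwp : ∀ i x, wp i x = if x i = true then (1/2 : ℝ) else -(1/2))
    (hwm : ∀ i x, wm i x = - wp i x)
    (x₀ : Fin n → Bool) (hx₀ : x₀ = fun _ => false)
    (f : (Fin n → Bool) → ℕ)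
    (hf : ∀ x, f x = if 0 < ∑ i, (wp i x + wm i x) then 1 else 0) :
    (∀ x, (∑ i, (wp i x + wm i x)) = 0) ∧
    (∀ x, f x = 0) ∧
    (∀ S : Set (Fin n),
      ((∀ x' ∈ extSet x₀ S, f x' = f x₀) ∧
        ∀ S' : Set (Fin n), S' ⊂ S → ¬ (∀ x' ∈ extSet x₀ S', f x' = f x₀)) ↔
      S = ∅) ∧
    (∀ S : Set (Fin n),
      (∑ i, (sSup (wp i '' extSet x₀ S) + sSup (wm i '' extSet x₀ S))) ≤ 0 ↔
      S = Set.univ) ∧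
    (∀ S : Set (Fin n),
      ((∑ i, (sSup (wp i '' extSet x₀ S) + sSup (wm i '' extSet x₀ S))) ≤ 0 ∧
        ∀ S' : Set (Fin n), S' ⊂ S →
          ¬ ((∑ i, (sSup (wp i '' extSet x₀ S') + sSup (wm i '' extSet x₀ S'))) ≤ 0)) ↔
      S = Set.univ) := by
  classical
  have hsum0 : ∀ x, (∑ i, (wp i x + wm i x)) = 0 := by
    intro x
    have : ∀ i : Fin n, wp i x + wm i x = 0 := by
      intro i; rw [hwm]; ring
    simp [this]
  have hf0 : ∀ x, f x = 0 := by
    intro x; rw [hf, hsum0]; simp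
  have hx0mem : ∀ S, x₀ ∈ extSet x₀ S := fun S i _ => rfl
  have habd : ∀ S : Set (Fin n), ∀ x' ∈ extSet x₀ S, f x' = f x₀ := by
    intro S x' _; rw [hf0, hf0]
  -- key computation of the sups
  have key : ∀ (S : Set (Fin n)) (i : Fin n),
      sSup (wp i '' extSet x₀ S) + sSup (wm i '' extSet x₀ S)
        = if i ∈ S then 0 else 1 := by
    intro S i
    by_cases hi : i ∈ S
    · have hconst : ∀ x' ∈ extSet x₀ S, wp i x' = -(1/2) := by
        intro x' hx'
        have : x' i = x₀ i := hx' i hi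
        rw [hwp, this, hx₀]; simp
      have hconstm : ∀ x' ∈ extSet x₀ S, wm i x' = (1/2 : ℝ) := by
        intro x' hx'; rw [hwm, hconst x' hx']; ring
      have h1 : wp i '' extSet x₀ S = {-(1/2 : ℝ)} := by
        apply Set.eq_singleton_iff_nonempty_unique_mem.2
        exact ⟨⟨wp i x₀, Set.mem_image_of_mem _ (hx0mem S)⟩,
          fun y ⟨x', hx', hy⟩ => hy ▸ hconst x' hx'⟩
      have h2 : wm i '' extSet x₀ S = {(1/2 : ℝ)} := by
        apply Set.eq_singleton_iff_nonempty_unique_mem.2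
        exact ⟨⟨wm i x₀, Set.mem_image_of_mem _ (hx0mem S)⟩,
          fun y ⟨x', hx', hy⟩ => hy ▸ hconstm x' hx'⟩
      rw [h1, h2, csSup_singleton, csSup_singleton, if_pos hi]; ring
    · have hbp : ∀ y ∈ wp i '' extSet x₀ S, y ≤ (1/2 : ℝ) := by
        rintro y ⟨x', _, rfl⟩
        rw [hwp]; split <;> norm_num
      have hbm : ∀ y ∈ wm i '' extSet x₀ S, y ≤ (1/2 : ℝ) := by
        rintro y ⟨x', _, rfl⟩
        rw [hwm, hwp]; split <;> norm_num
      have hmemp : (1/2 : ℝ) ∈ wp i '' extSet x₀ S := by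
        refine ⟨Function.update x₀ i true, ?_, ?_⟩
        · intro j hj
          exact Function.update_of_ne (by rintro rfl; exact hi hj) _ _
        · rw [hwp, Function.update_self]; simp
      have hmemm : (1/2 : ℝ) ∈ wm i '' extSet x₀ S := by
        refine ⟨x₀, hx0mem S, ?_⟩
        rw [hwm, hwp, hx₀]; norm_num
      have e1 : sSup (wp i '' extSet x₀ S) = 1/2 :=
        le_antisymm (csSup_le ⟨_, hmemp⟩ hbp) (le_csSup ⟨1/2, hbp⟩ hmemp)
      have e2 : sSup (wm i '' extSet x₀ S) = 1/2 :=
        le_antisymm (csSup_le ⟨_, hmemm⟩ hbm) (le_csSup ⟨1/2, hbm⟩ hmemm)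
      rw [e1, e2, if_neg hi]; norm_num
  have keysum : ∀ S : Set (Fin n),
      (∑ i, (sSup (wp i '' extSet x₀ S) + sSup (wm i '' extSet x₀ S)))
        = (Finset.univ.filter (fun i => i ∉ S)).card := by
    intro S
    rw [Finset.sum_congr rfl (fun i _ => key S i)]
    rw [Finset.sum_ite]
    simp
  have hiff : ∀ S : Set (Fin n),
      (∑ i, (sSup (wp i '' extSet x₀ S) + sSup (wm i '' extSet x₀ S))) ≤ 0 ↔
      S = Set.univ := by
    intro S
    rw [keysum]
    constructor
    · intro h
      have hc : (Finset.univ.filter (fun i => i ∉ S)).card = 0 := by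
        have := Nat.cast_nonneg (α := ℝ) (Finset.univ.filter (fun i => i ∉ S)).card
        exact_mod_cast le_antisymm h this
      rw [Finset.card_eq_zero, Finset.filter_eq_empty_iff] at hc
      ext i; simp only [Set.mem_univ, iff_true]
      exact not_not.1 (hc (Finset.mem_univ i))
    · intro h; subst h; simp
  refine ⟨hsum0, hf0, ?_, hiff, ?_⟩
  · intro S
    constructor
    · rintro ⟨_, hmin⟩
      by_contra hne
      exact hmin ∅ (Set.empty_ssubset.2 (Set.nonempty_iff_ne_empty.2 hne)) (habd ∅)
    · rintro rfl
      exact ⟨habd ∅, fun S' hS' _ => absurd hS' (by simp [Set.ssubset_def])⟩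
  · intro S
    constructor
    · rintro ⟨h1, _⟩; exact (hiff S).1 h1
    · rintro rfl
      refine ⟨(hiff Set.univ).2 rfl, fun S' hS' h => ?_⟩
      exact hS'.ne ((hiff S').1 h ▸ rfl)
end

section
/- Assume each domain D i is finite and nonempty. Let m ≥ 2 and, for each class j ∈ Fin m, let w^j_1, …, w^j_{p_j} : X → ℝ be tree weight functions with total weights W_j = ∑_k w^j_k. Fix x ∈ X and i ∈ Fin m with W_j(x) < W_i(x) for all j ≠ i. For S ⊆ Fin n let C(S) be the tree-specific condition: for every j ≠ i, ∑_{k=1}^{p_i} min_{x' ∈ Ext(x,S)} w^i_k(x') > ∑_{k=1}^{p_j} max_{x' ∈ Ext(x,S)} w^j_k(x'). Let l be any list containing every element of Fin n and let t be the result of List.foldl (fun t c => if C (t.erase c) then t.erase c else t) (Finset.univ) l. Then C(t) holds and no proper subset of t satisfies C; that is, the greedy algorithm TS returns a tree-specific explanation for x given the boosted tree. -/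
/-! The greedy algorithm scans the attributes once and drops each one whose removal keeps the
condition true. For an upward-closed condition, an attribute that could not be dropped when it
was scanned can never be dropped later, since the set only shrinks; so the result is minimal
as soon as every one of its attributes is scanned. The tree-specific condition is upward
closed because enlarging `S` shrinks `Ext(x, S)`, which lowers every maximum and raises every
minimum, and it holds for `S = univ` since `Ext(x, univ) = {x}`. -/

/-- The set of extensions of `x` on the (finite) set of attributes `S`. -/
def extSetF {n : ℕ} {D : Fin n → Type*} (x : (i : Fin n) → D i) (S : Finset (Fin n)) :
    Set ((i : Fin n) → D i) := {x' | ∀ i ∈ S, x' i = x i}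

namespace Finset

variable {α : Type*} [DecidableEq α]

theorem not_of_ssubset_of_forall_not_erase {C : Finset α → Prop} (hC : Monotone C) {t : Finset α}
    (ht : ∀ c ∈ t, ¬ C (t.erase c)) {t' : Finset α} (ht' : t' ⊂ t) : ¬ C t' := by
  obtain ⟨c, hct, hct'⟩ := exists_of_ssubset ht'
  exact fun h => ht c hct (hC (subset_erase.mpr ⟨ht'.subset, hct'⟩) h)

variable (C : Finset α → Prop) [DecidablePred C]

def greedyErase (t : Finset α) (c : α) : Finset α :=
  if C (t.erase c) then t.erase c else t

variable {C}

theorem greedyErase_subset (t : Finset α) (c : α) : greedyErase C t c ⊆ t := by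
  unfold greedyErase
  split_ifs
  exacts [erase_subset c t, Subset.refl t]

theorem greedyErase_of {t : Finset α} (ht : C t) (c : α) : C (greedyErase C t c) := by
  unfold greedyErase
  split_ifs with h
  exacts [h, ht]

theorem foldl_greedyErase_subset (l : List α) (s : Finset α) :
    l.foldl (greedyErase C) s ⊆ s := by
  induction l generalizing s with
  | nil => exact Subset.refl s
  | cons c l ih => exact (ih _).trans (greedyErase_subset s c)

theorem foldl_greedyErase_of (l : List α) {s : Finset α} (hs : C s) :
    C (l.foldl (greedyErase C) s) := by
  induction l generalizing s with
  | nil => exact hs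
  | cons c l ih => exact ih (greedyErase_of hs c)

theorem not_erase_foldl_greedyErase (hC : Monotone C) {l : List α} {c : α} (hcl : c ∈ l)
    (s : Finset α) (hc : c ∈ l.foldl (greedyErase C) s) :
    ¬ C ((l.foldl (greedyErase C) s).erase c) := by
  induction l generalizing s with
  | nil => cases hcl
  | cons d l ih =>
    rw [List.foldl_cons] at hc ⊢
    rcases List.mem_cons.mp hcl with rfl | hcl
    · have hsub := foldl_greedyErase_subset (C := C) l (greedyErase C s c)
      unfold greedyErase at hc hsub ⊢
      split_ifs at hc hsub ⊢ with h
      · exact absurd (hsub hc) (notMem_erase c s)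
      · exact fun h' => h (hC (erase_subset_erase c hsub) h')
    · exact ih hcl _ hc

theorem foldl_greedyErase_minimal (hC : Monotone C) {s : Finset α} (hs : C s) {l : List α}
    (hl : ∀ a ∈ s, a ∈ l) :
    C (l.foldl (greedyErase C) s) ∧ ∀ t' ⊂ l.foldl (greedyErase C) s, ¬ C t' :=
  ⟨foldl_greedyErase_of l hs, fun _ => not_of_ssubset_of_forall_not_erase hC
    fun c hc => not_erase_foldl_greedyErase hC (hl c (foldl_greedyErase_subset l s hc)) s hc⟩

end Finset

section TreeSpecific

variable {n : ℕ} {D : Fin n → Type*}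

theorem extSetF_antitone (x : (i : Fin n) → D i) : Antitone (extSetF x) :=
  fun _ _ hST _ hx' i hi => hx' i (hST hi)

theorem mem_extSetF_self (x : (i : Fin n) → D i) (S : Finset (Fin n)) : x ∈ extSetF x S :=
  fun _ _ => rfl

theorem extSetF_univ (x : (i : Fin n) → D i) : extSetF x Finset.univ = {x} :=
  Set.eq_singleton_iff_unique_mem.mpr
    ⟨mem_extSetF_self x _, fun _ hx' => funext fun i => hx' i (Finset.mem_univ i)⟩

variable {m : ℕ} {p : Fin m → ℕ}

def TreeSpecific (w : (j : Fin m) → Fin (p j) → ((i : Fin n) → D i) → ℝ)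
    (x : (i : Fin n) → D i) (i : Fin m) (S : Finset (Fin n)) : Prop :=
  ∀ j, j ≠ i → (∑ k, sSup (w j k '' extSetF x S)) < ∑ k, sInf (w i k '' extSetF x S)

theorem treeSpecific_univ {w : (j : Fin m) → Fin (p j) → ((i : Fin n) → D i) → ℝ}
    {x : (i : Fin n) → D i} {i : Fin m} (hclass : ∀ j, j ≠ i → (∑ k, w j k x) < ∑ k, w i k x) :
    TreeSpecific w x i Finset.univ := by
  simpa only [TreeSpecific, extSetF_univ, Set.image_singleton, csSup_singleton,
    csInf_singleton] using hclass

variable [∀ i, Finite (D i)]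

theorem csSup_image_extSetF_antitone (f : ((i : Fin n) → D i) → ℝ) (x : (i : Fin n) → D i) :
    Antitone fun S => sSup (f '' extSetF x S) := fun _ _ hST =>
  csSup_le_csSup (Set.toFinite _).bddAbove ⟨f x, x, mem_extSetF_self x _, rfl⟩
    (Set.image_mono (extSetF_antitone x hST))

theorem csInf_image_extSetF_monotone (f : ((i : Fin n) → D i) → ℝ) (x : (i : Fin n) → D i) :
    Monotone fun S => sInf (f '' extSetF x S) := fun _ _ hST =>
  csInf_le_csInf (Set.toFinite _).bddBelow ⟨f x, x, mem_extSetF_self x _, rfl⟩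
    (Set.image_mono (extSetF_antitone x hST))

theorem treeSpecific_monotone (w : (j : Fin m) → Fin (p j) → ((i : Fin n) → D i) → ℝ)
    (x : (i : Fin n) → D i) (i : Fin m) : Monotone (TreeSpecific w x i) :=
  fun S T hST hS j hj => calc
    ∑ k, sSup (w j k '' extSetF x T) ≤ ∑ k, sSup (w j k '' extSetF x S) :=
      Finset.sum_le_sum fun k _ => csSup_image_extSetF_antitone (w j k) x hST
    _ < ∑ k, sInf (w i k '' extSetF x S) := hS j hj
    _ ≤ ∑ k, sInf (w i k '' extSetF x T) :=
      Finset.sum_le_sum fun k _ => csInf_image_extSetF_monotone (w i k) x hST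

end TreeSpecific

open Classical in
theorem stmt14_general {n m : ℕ} (D : Fin n → Type*)
    [∀ i, Fintype (D i)]
    (p : Fin m → ℕ)
    (w : (j : Fin m) → Fin (p j) → ((i : Fin n) → D i) → ℝ)
    (x : (i : Fin n) → D i) (i : Fin m)
    (hclass : ∀ j, j ≠ i → (∑ k, w j k x) < ∑ k, w i k x)
    (C : Finset (Fin n) → Prop)
    (hC : ∀ S : Finset (Fin n), C S ↔ ∀ j, j ≠ i →
      (∑ k, sSup (w j k '' extSetF x S)) < ∑ k, sInf (w i k '' extSetF x S))
    (l : List (Fin n)) (hl : ∀ a : Fin n, a ∈ l)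
    (t : Finset (Fin n))
    (ht : t = List.foldl (fun t c => if C (t.erase c) then t.erase c else t)
      (Finset.univ : Finset (Fin n)) l) :
    C t ∧ ∀ t' : Finset (Fin n), t' ⊂ t → ¬ C t' := by
  obtain rfl : C = TreeSpecific w x i := funext fun S => propext (hC S)
  subst ht
  exact Finset.foldl_greedyErase_minimal (treeSpecific_monotone w x i)
    (treeSpecific_univ hclass) fun a _ => hl a

open Classical in
/-- Correctness of the greedy algorithm `TS`: starting from the full set of attributes
and greedily removing attributes while the tree-specific condition `C` still holds,
the result satisfies `C` and is subset-minimal with this property, i.e. it is a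
tree-specific explanation for `x` given the boosted tree. -/
theorem stmt14 {n m : ℕ} (hn : 1 ≤ n) (hm : 2 ≤ m) (D : Fin n → Type*)
    [∀ i, Fintype (D i)] [∀ i, Nonempty (D i)]
    (p : Fin m → ℕ)
    (w : (j : Fin m) → Fin (p j) → ((i : Fin n) → D i) → ℝ)
    (x : (i : Fin n) → D i) (i : Fin m)
    (hclass : ∀ j, j ≠ i → (∑ k, w j k x) < ∑ k, w i k x)
    (C : Finset (Fin n) → Prop)
    (hC : ∀ S : Finset (Fin n), C S ↔ ∀ j, j ≠ i →
      (∑ k, sSup (w j k '' extSetF x S)) < ∑ k, sInf (w i k '' extSetF x S))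
    (l : List (Fin n)) (hl : ∀ a : Fin n, a ∈ l)
    (t : Finset (Fin n))
    (ht : t = List.foldl (fun t c => if C (t.erase c) then t.erase c else t)
      (Finset.univ : Finset (Fin n)) l) :
    C t ∧ ∀ t' : Finset (Fin n), t' ⊂ t → ¬ C t' :=
  stmt14_general D p w x i hclass C hC l hl t ht
end
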